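/- Equip ℝ³ with the Minkowski bilinear form ⟨p, q⟩₁ = p₁q₁ + p₂q₂ − p₃q₃. Call an affine bijection S(p) = L(p) + b of ℝ³ (L linear, b ∈ ℝ³) a Lorentz isometry if ⟨L p, L q⟩₁ = ⟨p, q⟩₁ for all p, q, and time-orientation preserving if the third coordinate of L(0,0,1) is positive. Let Iso_ξ denote the group of Lorentz isometries whose linear part fixes the vector (0,0,1), and let G be the subgroup of linear Lorentz isometries generated by the hyperbolic rotations φ_θ(x,y,z) = (x, y cosh θ + z sinh θ, y sinh θ + z cosh θ), θ ∈ ℝ, and the parabolic rotations ψ_a(x,y,z) = (x − a y + a z, a x + (1 − a²/2) y + (a²/2) z, a x − (a²/2) y + (1 + a²/2) z), a ∈ ℝ. Then for every time-orientation preserving Lorentz isometry S of ℝ³ there exist unique S₁ ∈ Iso_ξ and S₂ ∈ G such that S = S₁ ∘ S₂. -/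

import Mathlib

/-- The Minkowski bilinear form `⟨p, q⟩₁ = p₁q₁ + p₂q₂ − p₃q₃` on `ℝ³`. -/
def mink (p q : Fin 3 → ℝ) : ℝ := p 0 * q 0 + p 1 * q 1 - p 2 * q 2

/-- The vector `(0,0,1)`. -/
def e3 : Fin 3 → ℝ := ![0, 0, 1]

/-- The linear part `p ↦ S(p) − S(0)` of an affine map `S`. -/
def linPart (S : (Fin 3 → ℝ) → (Fin 3 → ℝ)) (p : Fin 3 → ℝ) : Fin 3 → ℝ := S p - S 0

/-- A Lorentz isometry of `𝕃³`: an affine bijection `S(p) = L(p) + b` whose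
linear part `L` preserves the Minkowski form. -/
def IsLorentzIso (S : (Fin 3 → ℝ) → (Fin 3 → ℝ)) : Prop :=
  ∃ (L : (Fin 3 → ℝ) →ₗ[ℝ] (Fin 3 → ℝ)) (b : Fin 3 → ℝ),
    Function.Bijective L ∧ (∀ p q, mink (L p) (L q) = mink p q) ∧ ∀ p, S p = L p + b

/-- The hyperbolic rotation `φ_θ(x,y,z) = (x, y cosh θ + z sinh θ, y sinh θ + z cosh θ)`. -/
noncomputable def hypRot (θ : ℝ) (p : Fin 3 → ℝ) : Fin 3 → ℝ :=
  ![p 0, p 1 * Real.cosh θ + p 2 * Real.sinh θ, p 1 * Real.sinh θ + p 2 * Real.cosh θ]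

/-- The parabolic rotation
`ψ_a(x,y,z) = (x − ay + az, ax + (1 − a²/2)y + (a²/2)z, ax − (a²/2)y + (1 + a²/2)z)`. -/
noncomputable def parRot (a : ℝ) (p : Fin 3 → ℝ) : Fin 3 → ℝ :=
  ![p 0 - a * p 1 + a * p 2,
    a * p 0 + (1 - a ^ 2 / 2) * p 1 + (a ^ 2 / 2) * p 2,
    a * p 0 - (a ^ 2 / 2) * p 1 + (1 + a ^ 2 / 2) * p 2]

/-- The subgroup `G` generated by the hyperbolic and parabolic rotations (the
generating set is closed under inverses, so closure under composition generates
the subgroup). -/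
inductive InG : ((Fin 3 → ℝ) → (Fin 3 → ℝ)) → Prop
  | hyp (θ : ℝ) : InG (hypRot θ)
  | par (a : ℝ) : InG (parRot a)
  | comp {S T : (Fin 3 → ℝ) → (Fin 3 → ℝ)} : InG S → InG T → InG (S ∘ T)

/-!
Every element of `G` has the form `ψ_a ∘ φ_θ`, with composition law
`(a, θ) · (a', θ') = (a + a' e^θ, θ + θ')`, and `g ↦ g (0,0,1)` maps `G` bijectively onto the upper
sheet `⟨w, w⟩₁ = -1, w₃ > 0` of the hyperboloid. If `L` is the linear part of `S`, time orientation
puts `w = L⁻¹ (0,0,1)` on that sheet; taking `g ∈ G` with `g (0,0,1) = w` gives the factorization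
`S = (S ∘ g) ∘ g⁻¹`. Conversely, `S = S₁ ∘ S₂` forces `S₂ w = (0,0,1)`, so `S₂ ∘ g` fixes `(0,0,1)`
and is the identity, since the stabilizer of `(0,0,1)` in `G` is trivial.
-/

open Real

lemma mink_hypRot (θ : ℝ) (p q : Fin 3 → ℝ) :
    mink (hypRot θ p) (hypRot θ q) = mink p q := by
  simp only [mink, hypRot, Matrix.cons_val_zero, Matrix.cons_val_one, Matrix.cons_val_two,
    Matrix.head_cons, Matrix.tail_cons]
  linear_combination (p 1 * q 1 - p 2 * q 2) * cosh_sq_sub_sinh_sq θ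

lemma mink_parRot (a : ℝ) (p q : Fin 3 → ℝ) :
    mink (parRot a p) (parRot a q) = mink p q := by
  simp only [mink, parRot, Matrix.cons_val_zero, Matrix.cons_val_one, Matrix.cons_val_two,
    Matrix.head_cons, Matrix.tail_cons]
  ring

lemma isLinearMap_hypRot (θ : ℝ) : IsLinearMap ℝ (hypRot θ) :=
  ⟨fun p q ↦ by ext i; fin_cases i <;> simp [hypRot] <;> ring,
   fun c p ↦ by ext i; fin_cases i <;> simp [hypRot] <;> ring⟩

lemma isLinearMap_parRot (a : ℝ) : IsLinearMap ℝ (parRot a) :=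
  ⟨fun p q ↦ by ext i; fin_cases i <;> simp [parRot] <;> ring,
   fun c p ↦ by ext i; fin_cases i <;> simp [parRot] <;> ring⟩

lemma hypRot_zero : hypRot 0 = id := by
  ext p i
  fin_cases i <;> simp [hypRot]

lemma parRot_zero : parRot 0 = id := by
  ext p i
  fin_cases i <;> simp [parRot]

lemma eq_zero_of_forall_mink_eq_zero {p : Fin 3 → ℝ} (h : ∀ q, mink p q = 0) : p = 0 := by
  have h0 := h ![1, 0, 0]
  have h1 := h ![0, 1, 0]
  have h2 := h ![0, 0, 1]
  simp only [mink, Matrix.cons_val_zero, Matrix.cons_val_one, Matrix.cons_val_two,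
    Matrix.head_cons, Matrix.tail_cons] at h0 h1 h2
  ext i
  fin_cases i <;> simp only [Fin.zero_eta, Fin.mk_one, Fin.reduceFinMk, Fin.isValue, Pi.zero_apply] <;>
    linarith

lemma LinearMap.injective_of_map_mink {L : (Fin 3 → ℝ) →ₗ[ℝ] (Fin 3 → ℝ)}
    (hL : ∀ p q, mink (L p) (L q) = mink p q) : Function.Injective L := by
  refine (injective_iff_map_eq_zero L).2 fun p hp ↦ eq_zero_of_forall_mink_eq_zero fun q ↦ ?_
  rw [← hL, hp]
  simp [mink]

lemma isLorentzIso_of_isLinearMap {f : (Fin 3 → ℝ) → (Fin 3 → ℝ)} (hf : IsLinearMap ℝ f)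
    (hmink : ∀ p q, mink (f p) (f q) = mink p q) : IsLorentzIso f := by
  have hinj := LinearMap.injective_of_map_mink (L := IsLinearMap.mk' f hf) hmink
  exact ⟨IsLinearMap.mk' f hf, 0, ⟨hinj, LinearMap.injective_iff_surjective.1 hinj⟩, hmink,
    fun p ↦ (add_zero _).symm⟩

lemma IsLorentzIso.comp {S T : (Fin 3 → ℝ) → (Fin 3 → ℝ)} (hS : IsLorentzIso S)
    (hT : IsLorentzIso T) : IsLorentzIso (S ∘ T) := by
  obtain ⟨L, b, hLbij, hL, hSL⟩ := hS
  obtain ⟨M, c, hMbij, hM, hTM⟩ := hT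
  refine ⟨L ∘ₗ M, L c + b, hLbij.comp hMbij, fun p q ↦ by simp [hL, hM], fun p ↦ ?_⟩
  simp [hSL, hTM, add_assoc]

lemma linPart_eq {S : (Fin 3 → ℝ) → (Fin 3 → ℝ)} {L : (Fin 3 → ℝ) →ₗ[ℝ] (Fin 3 → ℝ)}
    {b : Fin 3 → ℝ} (h : ∀ p, S p = L p + b) : linPart S = L := by
  ext p : 1
  simp [linPart, h]

lemma linPart_comp {S T : (Fin 3 → ℝ) → (Fin 3 → ℝ)} (hT : T 0 = 0) :
    linPart (S ∘ T) = linPart S ∘ T := by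
  ext p : 1
  simp [linPart, hT]

lemma IsLorentzIso.injective_linPart {S : (Fin 3 → ℝ) → (Fin 3 → ℝ)} (hS : IsLorentzIso S) :
    Function.Injective (linPart S) := by
  obtain ⟨L, b, hLbij, -, hSL⟩ := hS
  rw [linPart_eq hSL]
  exact hLbij.injective

lemma IsLorentzIso.exists_linPart_eq_e3 {S : (Fin 3 → ℝ) → (Fin 3 → ℝ)} (hS : IsLorentzIso S)
    (hTime : 0 < linPart S e3 2) : ∃ w, linPart S w = e3 ∧ mink w w = -1 ∧ 0 < w 2 := by
  obtain ⟨L, b, hLbij, hL, hSL⟩ := hS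
  rw [linPart_eq hSL] at hTime ⊢
  obtain ⟨w, hw⟩ := hLbij.surjective e3
  have hww : mink w w = -1 := by simpa [hw, mink, e3] using (hL w w).symm
  have hwe3 : L e3 2 = w 2 := by simpa [hw, mink, e3] using hL w e3
  exact ⟨w, hw, hww, hwe3 ▸ hTime⟩

noncomputable def parHypRot (a θ : ℝ) : (Fin 3 → ℝ) → (Fin 3 → ℝ) := parRot a ∘ hypRot θ

lemma isLorentzIso_parHypRot (a θ : ℝ) : IsLorentzIso (parHypRot a θ) :=
  (isLorentzIso_of_isLinearMap (isLinearMap_parRot a) (mink_parRot a)).comp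
    (isLorentzIso_of_isLinearMap (isLinearMap_hypRot θ) (mink_hypRot θ))

lemma parHypRot_apply_zero (a θ : ℝ) : parHypRot a θ 0 = 0 := by
  simp [parHypRot, (isLinearMap_hypRot θ).map_zero, (isLinearMap_parRot a).map_zero]

lemma parHypRot_zero_zero : parHypRot 0 0 = id := by
  rw [parHypRot, parRot_zero, hypRot_zero, Function.id_comp]

lemma parHypRot_comp_parHypRot (a θ a' θ' : ℝ) :
    parHypRot a θ ∘ parHypRot a' θ' = parHypRot (a + a' * exp θ) (θ + θ') := by
  ext p i
  fin_cases i <;> simp [parHypRot, parRot, hypRot, cosh_eq, sinh_eq, exp_add, exp_neg] <;>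
    field_simp <;> ring

lemma parHypRot_comp_parHypRot_inv (a θ : ℝ) :
    parHypRot a θ ∘ parHypRot (-(a * exp (-θ))) (-θ) = id := by
  rw [parHypRot_comp_parHypRot, add_neg_cancel, exp_neg, neg_mul, mul_assoc,
    inv_mul_cancel₀ (exp_ne_zero θ), mul_one, add_neg_cancel, parHypRot_zero_zero]

lemma inG_iff {T : (Fin 3 → ℝ) → (Fin 3 → ℝ)} : InG T ↔ ∃ a θ, T = parHypRot a θ := by
  refine ⟨fun h ↦ ?_, fun ⟨a, θ, hT⟩ ↦ hT ▸ .comp (.par a) (.hyp θ)⟩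
  induction h with
  | hyp θ => exact ⟨0, θ, by rw [parHypRot, parRot_zero, Function.id_comp]⟩
  | par a => exact ⟨a, 0, by rw [parHypRot, hypRot_zero, Function.comp_id]⟩
  | comp _ _ ihS ihT =>
    obtain ⟨a, θ, rfl⟩ := ihS
    obtain ⟨a', θ', rfl⟩ := ihT
    exact ⟨_, _, parHypRot_comp_parHypRot a θ a' θ'⟩

lemma parHypRot_apply_e3 (a θ : ℝ) :
    parHypRot a θ e3 = ![a * exp (-θ), sinh θ + a ^ 2 / 2 * exp (-θ),
      cosh θ + a ^ 2 / 2 * exp (-θ)] := by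
  ext i
  fin_cases i <;> simp [parHypRot, parRot, hypRot, e3, ← cosh_sub_sinh] <;> ring

lemma parHypRot_eq_id_of_apply_e3 {a θ : ℝ} (h : parHypRot a θ e3 = e3) :
    parHypRot a θ = id := by
  rw [parHypRot_apply_e3] at h
  have ha : a = 0 := by simpa [e3, exp_ne_zero] using congrFun h 0
  subst ha
  have hθ : θ = 0 := by simpa [e3] using congrFun h 1
  rw [hθ, parHypRot_zero_zero]

-- `parHypRot a θ e3` has light-cone coordinate `z - y = e^{-θ}` and first coordinate `a e^{-θ}`.
lemma exists_parHypRot_apply_e3 {w : Fin 3 → ℝ} (hw : mink w w = -1) (hw2 : 0 < w 2) :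
    ∃ a θ, parHypRot a θ e3 = w := by
  have hw' : w 0 * w 0 + w 1 * w 1 - w 2 * w 2 = -1 := hw
  have hu : 0 < w 2 - w 1 := by nlinarith [sq_nonneg (w 0), sq_nonneg (w 1 + w 2)]
  refine ⟨w 0 / (w 2 - w 1), -log (w 2 - w 1), ?_⟩
  rw [parHypRot_apply_e3, sinh_eq, cosh_eq, neg_neg, exp_neg, exp_log hu]
  ext i
  fin_cases i <;>
    simp only [Fin.zero_eta, Fin.mk_one, Fin.reduceFinMk, Fin.isValue, Matrix.cons_val_zero,
      Matrix.cons_val_one, Matrix.cons_val] <;>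
    field_simp <;> linear_combination hw'

/-- every time-orientation preserving Lorentz isometry `S` of
`𝕃³` factors uniquely as `S = S₁ ∘ S₂` with `S₁ ∈ Iso_ξ` (Lorentz isometries
whose linear part fixes `(0,0,1)`) and `S₂ ∈ G`. -/
theorem lorentz_iso_factorization (S : (Fin 3 → ℝ) → (Fin 3 → ℝ))
    (hS : IsLorentzIso S) (hTime : 0 < linPart S e3 2) :
    ∃! ST : ((Fin 3 → ℝ) → (Fin 3 → ℝ)) × ((Fin 3 → ℝ) → (Fin 3 → ℝ)),
      (IsLorentzIso ST.1 ∧ linPart ST.1 e3 = e3) ∧ InG ST.2 ∧ S = ST.1 ∘ ST.2 := by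
  obtain ⟨w, hSw, hw, hw2⟩ := hS.exists_linPart_eq_e3 hTime
  obtain ⟨a, θ, hg⟩ := exists_parHypRot_apply_e3 hw hw2
  refine ⟨(S ∘ parHypRot a θ, parHypRot (-(a * exp (-θ))) (-θ)),
    ⟨⟨hS.comp (isLorentzIso_parHypRot a θ), ?_⟩, inG_iff.2 ⟨_, _, rfl⟩, ?_⟩, ?_⟩
  · rw [linPart_comp (parHypRot_apply_zero a θ), Function.comp_apply, hg, hSw]
  · rw [Function.comp_assoc, parHypRot_comp_parHypRot_inv, Function.comp_id]
  rintro ⟨T₁, T₂⟩ ⟨⟨hT₁, hT₁e3⟩, hT₂, rfl⟩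
  obtain ⟨a', θ', rfl⟩ := inG_iff.1 hT₂
  have hT₂w : parHypRot a' θ' (parHypRot a θ e3) = e3 := hT₁.injective_linPart <| by
    rw [hT₁e3, hg, ← Function.comp_apply (f := linPart T₁),
      ← linPart_comp (parHypRot_apply_zero a' θ'), hSw]
  have hinv : parHypRot a' θ' ∘ parHypRot a θ = id := by
    rw [← Function.comp_apply (f := parHypRot a' θ'), parHypRot_comp_parHypRot] at hT₂w
    rw [parHypRot_comp_parHypRot, parHypRot_eq_id_of_apply_e3 hT₂w]
  refine Prod.ext (by rw [Function.comp_assoc, hinv, Function.comp_id]) ?_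
  exact Function.LeftInverse.eq_rightInverse (congrFun hinv)
    (congrFun (parHypRot_comp_parHypRot_inv a θ))
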